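/- arXiv:1405.4189 — 6 statements merged into one kernel-verified Lean document; each statement's English description precedes it below -/
import Mathlib

section
/- If f is a ranking function for a module P (i.e., a map from valuations into a well-ordered set whose value strictly decreases between consecutive visits to the final location along any execution), then every fair ω-trace of P is terminating (has no infinite execution). -/
open Filter

theorem StrictAntiOn.not_frequently_atTop {W : Type*} [Preorder W] [WellFoundedLT W]
    {g : ℕ → W} {p : ℕ → Prop} (hg : StrictAntiOn g {n | p n}) : ¬ ∃ᶠ n in atTop, p n :=
  fun h ↦
    let ⟨φ, hφ, hp⟩ := extraction_of_frequently_atTop h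
    not_strictAnti_of_wellFoundedLT (g ∘ φ) fun _ _ hij ↦ hg (hp _) (hp _) (hφ hij)

/-- If `f` is a ranking function for a module (value strictly decreases between
consecutive visits of the final location along any execution), then every fair
ω-trace of the module is terminating (admits no infinite execution). -/
theorem stmt0 {L St V W : Type} [LinearOrder W] [WellFoundedLT W]
    (δ : L → St → L → Prop) (linit lfin : L)
    (rel : St → V → V → Prop) (f : V → W)
    -- `f` is a ranking function for the module:
    (hrank : ∀ (n k : ℕ) (ℓ : ℕ → L) (w : ℕ → St) (ν : ℕ → V),
      ℓ 0 = linit →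
      (∀ i < n, δ (ℓ i) (w i) (ℓ (i + 1))) →
      (∀ i < n, rel (w i) (ν i) (ν (i + 1))) →
      0 < k → k < n → ℓ k = lfin → ℓ n = lfin →
      f (ν n) < f (ν k))
    -- a fair ω-trace `w` of the module:
    (ℓ : ℕ → L) (w : ℕ → St)
    (hinit : ℓ 0 = linit)
    (hpath : ∀ i, δ (ℓ i) (w i) (ℓ (i + 1)))
    (hfair : ∀ n, ∃ m, n ≤ m ∧ ℓ m = lfin) :
    ¬ ∃ ν : ℕ → V, ∀ i, rel (w i) (ν i) (ν (i + 1)) := by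
  rintro ⟨ν, hν⟩
  have hvisits : ∃ᶠ n in atTop, ℓ n = lfin ∧ 0 < n :=
    (frequently_atTop.2 hfair).and_eventually (eventually_gt_atTop 0)
  refine StrictAntiOn.not_frequently_atTop (g := f ∘ ν) ?_ hvisits
  rintro k ⟨hk, hk_pos⟩ n ⟨hn, -⟩ hkn
  exact hrank n k ℓ w ν hinit (fun i _ ↦ hpath i) (fun i _ ↦ hν i) hk_pos hkn hk hn
end

section
/- Soundness of rank certificates: if (P, f, I) is a certified module — i.e., I maps locations to predicates with I(ℓ_init) ⇔ (oldrnk = ∞), I(ℓ_fin) ⇒ f(v) ≺ oldrnk, every edge (ℓ, st, ℓ') with ℓ ≠ ℓ_fin gives a valid Hoare triple {I(ℓ)} st {I(ℓ')}, and every edge from ℓ_fin gives a valid Hoare triple {I(ℓ_fin)} oldrnk := f(v); st {I(ℓ')} — then f is a ranking function for P, and hence every fair ω-trace of P is terminating. -/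
/-!
Along a run, track the value `oldrnk` would take under the instrumented program. The
certificate is then an inductive invariant of the run, and since `oldrnk` only changes at
`ℓ_fin`, where it drops from a value above `f(v)` to `f(v)`, it is non-increasing. Hence at
two visits `k < n` of `ℓ_fin` we get `f(ν n) < oldrnk ≤ f(ν k)`. A fair run visits `ℓ_fin`
infinitely often, which would give an infinite descending chain in `W`.
-/

/-- A certified module: the annotation `I` maps locations to predicates over
valuations extended with the auxiliary variable `oldrnk` (an element of
`WithTop W`, where `⊤` plays the role of `∞`); the initial invariant is
`oldrnk = ∞`, the final invariant implies `f(v) ≺ oldrnk`, edges not leaving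
the final location give valid Hoare triples, and edges leaving the final
location give valid Hoare triples with the auxiliary assignment
`oldrnk := f(v)` inserted. -/
def Certified {L St V W : Type} [LinearOrder W]
    (δ : L → St → L → Prop) (linit lfin : L)
    (rel : St → V → V → Prop)
    (f : V → W) (I : L → Set (V × WithTop W)) : Prop :=
  (∀ p, p ∈ I linit ↔ p.2 = ⊤) ∧
  (∀ p ∈ I lfin, (f p.1 : WithTop W) < p.2) ∧
  (∀ l st l', δ l st l' → l ≠ lfin →
    ∀ ν o ν', (ν, o) ∈ I l → rel st ν ν' → (ν', o) ∈ I l') ∧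
  (∀ st l', δ lfin st l' →
    ∀ ν o ν', (ν, o) ∈ I lfin → rel st ν ν' → (ν', (f ν : WithTop W)) ∈ I l')

section RankCertificate

open Classical in
/-- The value of the auxiliary variable `oldrnk` at step `i` of the run `(ℓ, ν)`. -/
noncomputable def oldRank {L V W : Type} (lfin : L) (f : V → W) (ℓ : ℕ → L) (ν : ℕ → V) :
    ℕ → WithTop W
  | 0 => ⊤
  | i + 1 => if ℓ i = lfin then (f (ν i) : WithTop W) else oldRank lfin f ℓ ν i

variable {L St V W : Type} {lfin : L} {f : V → W} {ℓ : ℕ → L}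

theorem oldRank_succ_of_eq (ν : ℕ → V) {i : ℕ} (h : ℓ i = lfin) :
    oldRank lfin f ℓ ν (i + 1) = f (ν i) := by
  simp [oldRank, h]

theorem oldRank_succ_of_ne (ν : ℕ → V) {i : ℕ} (h : ℓ i ≠ lfin) :
    oldRank lfin f ℓ ν (i + 1) = oldRank lfin f ℓ ν i := by
  simp [oldRank, h]

namespace Certified

variable [LinearOrder W] {δ : L → St → L → Prop} {linit : L} {rel : St → V → V → Prop}
  {I : L → Set (V × WithTop W)} {w : ℕ → St} {ν : ℕ → V} {n : ℕ}

theorem mem_oldRank (hcert : Certified δ linit lfin rel f I) (h0 : ℓ 0 = linit)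
    (hδ : ∀ i < n, δ (ℓ i) (w i) (ℓ (i + 1)))
    (hrel : ∀ i < n, rel (w i) (ν i) (ν (i + 1))) :
    ∀ i ≤ n, (ν i, oldRank lfin f ℓ ν i) ∈ I (ℓ i) := by
  obtain ⟨hinit, -, hstep, hstepFin⟩ := hcert
  intro i hi
  induction i with
  | zero => exact h0 ▸ (hinit _).2 rfl
  | succ i ih =>
    have hi' : i < n := hi
    by_cases hfin : ℓ i = lfin
    · rw [oldRank_succ_of_eq ν hfin]
      exact hstepFin _ _ (hfin ▸ hδ i hi') _ _ _ (hfin ▸ ih hi'.le) (hrel i hi')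
    · rw [oldRank_succ_of_ne ν hfin]
      exact hstep _ _ _ (hδ i hi') hfin _ _ _ (ih hi'.le) (hrel i hi')

theorem oldRank_succ_le (hcert : Certified δ linit lfin rel f I) {i : ℕ}
    (hmem : (ν i, oldRank lfin f ℓ ν i) ∈ I (ℓ i)) :
    oldRank lfin f ℓ ν (i + 1) ≤ oldRank lfin f ℓ ν i := by
  by_cases hfin : ℓ i = lfin
  · rw [oldRank_succ_of_eq ν hfin]
    exact (hcert.2.1 _ (hfin ▸ hmem)).le
  · rw [oldRank_succ_of_ne ν hfin]

theorem oldRank_antitoneOn (hcert : Certified δ linit lfin rel f I) (h0 : ℓ 0 = linit)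
    (hδ : ∀ i < n, δ (ℓ i) (w i) (ℓ (i + 1)))
    (hrel : ∀ i < n, rel (w i) (ν i) (ν (i + 1))) {i j : ℕ} (hij : i ≤ j) (hjn : j ≤ n) :
    oldRank lfin f ℓ ν j ≤ oldRank lfin f ℓ ν i := by
  induction j, hij using Nat.le_induction with
  | base => rfl
  | succ j hij ih =>
    exact (hcert.oldRank_succ_le (hcert.mem_oldRank h0 hδ hrel j (by omega))).trans
      (ih (by omega))

theorem rank_lt (hcert : Certified δ linit lfin rel f I) (h0 : ℓ 0 = linit)
    (hδ : ∀ i < n, δ (ℓ i) (w i) (ℓ (i + 1)))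
    (hrel : ∀ i < n, rel (w i) (ν i) (ν (i + 1))) {k : ℕ} (hkn : k < n)
    (hk : ℓ k = lfin) (hn : ℓ n = lfin) :
    f (ν n) < f (ν k) := by
  have hlast : (f (ν n) : WithTop W) < oldRank lfin f ℓ ν n :=
    hcert.2.1 _ (hn ▸ hcert.mem_oldRank h0 hδ hrel n le_rfl)
  have hmono := hcert.oldRank_antitoneOn h0 hδ hrel (Nat.succ_le_of_lt hkn) le_rfl
  rw [oldRank_succ_of_eq ν hk] at hmono
  exact WithTop.coe_lt_coe.mp (hlast.trans_le hmono)

end Certified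

end RankCertificate

theorem not_frequently_of_rank_lt {W : Type} [Preorder W] [WellFoundedLT W] {p : ℕ → Prop}
    (g : ℕ → W) (hg : ∀ k n, k < n → p k → p n → g n < g k) :
    ¬ ∀ n, ∃ m ≥ n, p m := by
  intro hfreq
  have hinf : (Set.ofPred p).Infinite :=
    Nat.frequently_atTop_iff_infinite.mp (Filter.frequently_atTop.mpr hfreq)
  have hvisit := Nat.nth_mem_of_infinite hinf
  have hmono := Nat.nth_strictMono hinf
  exact not_strictAnti_of_wellFoundedLT (fun j => g (Nat.nth p j)) fun a b hab =>
    hg _ _ (hmono hab) (hvisit a) (hvisit b)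

/-- Soundness of rank certificates: if `(P, f, I)` is a certified module then
`f` is a ranking function for `P`, and hence every fair ω-trace of `P` is
terminating. -/
theorem stmt10 {L St V W : Type} [LinearOrder W] [WellFoundedLT W]
    (δ : L → St → L → Prop) (linit lfin : L)
    (rel : St → V → V → Prop)
    (f : V → W) (I : L → Set (V × WithTop W))
    (hcert : Certified δ linit lfin rel f I) :
    -- f is a ranking function for P:
    (∀ (n k : ℕ) (ℓ : ℕ → L) (w : ℕ → St) (ν : ℕ → V),
      ℓ 0 = linit →
      (∀ i < n, δ (ℓ i) (w i) (ℓ (i + 1))) →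
      (∀ i < n, rel (w i) (ν i) (ν (i + 1))) →
      0 < k → k < n → ℓ k = lfin → ℓ n = lfin →
      f (ν n) < f (ν k)) ∧
    -- hence every fair ω-trace of P is terminating:
    (∀ (ℓ : ℕ → L) (w : ℕ → St),
      ℓ 0 = linit →
      (∀ i, δ (ℓ i) (w i) (ℓ (i + 1))) →
      (∀ n, ∃ m ≥ n, ℓ m = lfin) →
      ¬ ∃ ν : ℕ → V, ∀ i, rel (w i) (ν i) (ν (i + 1))) := by
  refine ⟨fun n k ℓ w ν h0 hδ hrel _ hkn hk hn => hcert.rank_lt h0 hδ hrel hkn hk hn, ?_⟩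
  rintro ℓ w h0 hδ hfair ⟨ν, hrel⟩
  exact not_frequently_of_rank_lt (fun i => f (ν i))
    (fun k n hkn hk hn => hcert.rank_lt h0 (fun i _ => hδ i) (fun i _ => hrel i) hkn hk hn)
    hfair
end

section
/- Invariant propagation along a certified path: for a certified module (P, f, I), for every finite path ℓ_0 → ... → ℓ_n from the initial location and every corresponding execution ν_0, ..., ν_n, the extended valuation (ν_i augmented with oldrnk_i, where oldrnk_i = ∞ if ℓ_fin was not yet visited before step i and otherwise oldrnk_i = f(ν_j) for the greatest j < i with ℓ_j = ℓ_fin) satisfies I(ℓ_i), for all i = 0, ..., n. -/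
namespace Certified

variable {L St V W : Type} [LinearOrder W] {δ : L → St → L → Prop} {linit lfin : L}
  {rel : St → V → V → Prop} {f : V → W} {I : L → Set (V × WithTop W)}

theorem top_mem_init (h : Certified δ linit lfin rel f I) (ν : V) : (ν, ⊤) ∈ I linit :=
  (h.1 _).2 rfl

theorem mem_of_step [DecidableEq L] (h : Certified δ linit lfin rel f I) {l l' : L} {st : St}
    {ν ν' : V} {o : WithTop W} (hδ : δ l st l') (hrel : rel st ν ν') (hmem : (ν, o) ∈ I l) :
    (ν', if l = lfin then (f ν : WithTop W) else o) ∈ I l' := by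
  split_ifs with hl
  · subst hl
    exact h.2.2.2 st l' hδ ν o ν' hmem hrel
  · exact h.2.2.1 l st l' hδ hl ν o ν' hmem hrel

end Certified

/-- Invariant propagation along a certified path: for every finite path from
the initial location and every corresponding execution, the valuation at step
`i`, extended with `oldrnk_i` (which is `∞` if `lfin` was not yet visited
before step `i`, and otherwise `f(ν_j)` for the greatest `j < i` with
`ℓ_j = lfin`), satisfies the invariant `I(ℓ_i)`. -/
theorem stmt11 {L St V W : Type} [LinearOrder W] [DecidableEq L]
    (δ : L → St → L → Prop) (linit lfin : L)
    (rel : St → V → V → Prop)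
    (f : V → W) (I : L → Set (V × WithTop W))
    (hcert : Certified δ linit lfin rel f I)
    (n : ℕ) (ℓ : ℕ → L) (w : ℕ → St) (ν : ℕ → V)
    (hinit : ℓ 0 = linit)
    (hpath : ∀ i < n, δ (ℓ i) (w i) (ℓ (i + 1)))
    (hexec : ∀ i < n, rel (w i) (ν i) (ν (i + 1)))
    (o : ℕ → WithTop W)
    (ho0 : o 0 = ⊤)
    (hoS : ∀ i, o (i + 1) = if ℓ i = lfin then (f (ν i) : WithTop W) else o i) :
    ∀ i ≤ n, (ν i, o i) ∈ I (ℓ i) := by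
  intro i hi
  induction i with
  | zero => simpa only [hinit, ho0] using hcert.top_mem_init (ν 0)
  | succ k ih =>
    have hk : k < n := Nat.lt_of_succ_le hi
    rw [hoS k]
    exact hcert.mem_of_step (hpath k hk) (hexec k hk) (ih hk.le)
end

section
/- Modification rule 1 preserves certification: if (P, f, I) is a certified module and ℓ_i, ℓ_j are two locations with I(ℓ_i) = I(ℓ_j) (neither equal to the final location unless both are), then the module P' obtained by merging ℓ_i and ℓ_j (redirecting all edges accordingly) together with f and the induced annotation I' is again a certified module. -/
/-!
Merging is the quotient of the control-flow graph by the map `φ` sending `ℓj` to `ℓi` and fixing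
every other location. Any map `φ` along which the annotation descends (`I' ∘ φ = I`) and whose
fibre over the final location is that location alone transports certification: every edge of the
quotient graph is the image of an edge of the original graph, whose Hoare triple is already known,
and an edge leaves the image of the final location only if it left the final location itself.
-/

theorem Certified.map {L L' St V W : Type} [LinearOrder W]
    {δ : L → St → L → Prop} {linit lfin : L} {rel : St → V → V → Prop}
    {f : V → W} {I : L → Set (V × WithTop W)}
    (hcert : Certified δ linit lfin rel f I)
    (φ : L → L') (I' : L' → Set (V × WithTop W)) (hI' : ∀ l, I' (φ l) = I l)
    (hφfin : ∀ l, φ l = φ lfin → l = lfin) :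
    Certified (fun l st l' => ∃ p q, δ p st q ∧ φ p = l ∧ φ q = l')
      (φ linit) (φ lfin) rel f I' := by
  obtain ⟨hinit, hfin, hstep, hfinstep⟩ := hcert
  refine ⟨?_, ?_, ?_, ?_⟩
  · simpa only [hI'] using hinit
  · simpa only [hI'] using hfin
  · rintro _ st _ ⟨p, q, hδ, rfl, rfl⟩ hne ν o ν' hmem hrel
    rw [hI'] at hmem ⊢
    exact hstep p st q hδ (fun h => hne (congrArg φ h)) ν o ν' hmem hrel
  · rintro st _ ⟨p, q, hδ, hp, rfl⟩ ν o ν' hmem hrel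
    obtain rfl := hφfin p hp
    rw [hI'] at hmem ⊢
    exact hfinstep st q hδ ν o ν' hmem hrel

section Merge

variable {L : Type} [DecidableEq L] {ℓi ℓj : L}

theorem apply_merge_of_apply_eq {α : Type} {I : L → α} (hI : I ℓi = I ℓj) (l : L) :
    I (if l = ℓj then ℓi else l) = I l := by
  split_ifs with h
  · rw [hI, h]
  · rfl

theorem eq_of_merge_eq_merge_of_iff {l₀ : L} (hl₀ : ℓi = l₀ ↔ ℓj = l₀) (l : L)
    (h : (if l = ℓj then ℓi else l) = if l₀ = ℓj then ℓi else l₀) : l = l₀ := by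
  split_ifs at h with hl hj hj
  · rw [hl, hj]
  · exact absurd (hl₀.mp h).symm hj
  · exact absurd (h.trans ((hl₀.mpr hj.symm).trans hj)) hl
  · exact h

end Merge

/-- Modification rule 1 (merge locations) preserves certification: if two
locations `ℓi`, `ℓj` carry the same predicate (and neither is the final
location unless both are), then merging them (redirecting each of them to
`ℓi`, and all edges accordingly) with the induced annotation yields again a
certified module. -/
theorem stmt12 {L St V W : Type} [LinearOrder W] [DecidableEq L]
    (δ : L → St → L → Prop) (linit lfin : L)
    (rel : St → V → V → Prop)
    (f : V → W) (I : L → Set (V × WithTop W))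
    (hcert : Certified δ linit lfin rel f I)
    (ℓi ℓj : L) (hI : I ℓi = I ℓj) (hfin : ℓi = lfin ↔ ℓj = lfin) :
    Certified
      (fun l st l' => ∃ p q, δ p st q ∧
        (if p = ℓj then ℓi else p) = l ∧ (if q = ℓj then ℓi else q) = l')
      (if linit = ℓj then ℓi else linit)
      (if lfin = ℓj then ℓi else lfin)
      rel f I :=
  hcert.map (fun l => if l = ℓj then ℓi else l) I (apply_merge_of_apply_eq hI)
    (eq_of_merge_eq_merge_of_iff hfin)
end

section
/- Büchi decomposition existence: every ω-regular language L over a finite alphabet can be written as a finite union L = ⋃_{i=1}^n U_i · V_i^ω where each U_i and V_i is a regular language of finite words. -/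
/-- A language of finite words is regular if it is accepted by a DFA with
finitely many states. -/
def IsRegularLang {A : Type} (U : Set (List A)) : Prop :=
  ∃ (σ : Type) (_ : Fintype σ) (M : DFA A σ), (M.accepts : Set (List A)) = U

/-- `w ∈ U · V^ω`: there are cut points `k 0 < k 1 < ...` such that the prefix
of `w` before `k 0` lies in `U` and each segment `w[k j, k (j+1))` is a
(nonempty) word in `V`. -/
def OmegaCat {A : Type} (U V : Set (List A)) : Set (ℕ → A) :=
  {w | ∃ k : ℕ → ℕ, (∀ j, k j < k (j + 1)) ∧
        ((List.range (k 0)).map w ∈ U) ∧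
        ∀ j, (List.range (k (j + 1) - k j)).map (fun t => w (k j + t)) ∈ V}

/-!
There are finitely many states, so an accepting run visits some accepting state `f` infinitely
often. Cutting the word at these visits writes it as a prefix leading the automaton from the
initial state to `f`, followed by infinitely many blocks leading it from `f` back to `f`; for fixed
`f` both kinds of blocks form regular languages. Conversely, runs on the blocks of such a
factorisation glue to an accepting run.
-/

open Set Filter

theorem StrictMono.eq_of_mem_Ico_of_mem_Ico {k : ℕ → ℕ} (hk : StrictMono k) {i j m : ℕ}
    (hi : m ∈ Ico (k i) (k (i + 1))) (hj : m ∈ Ico (k j) (k (j + 1))) : i = j := by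
  by_contra hij
  exact Set.disjoint_left.mp (hk.monotone.pairwise_disjoint_on_Ico_succ hij) hi hj

theorem StrictMono.exists_mem_Ico {k : ℕ → ℕ} (hk : StrictMono k) {m : ℕ} (hm : k 0 ≤ m) :
    ∃ j, m ∈ Ico (k j) (k (j + 1)) := by
  have hmem : m ∈ Ico (k 0) (k (m + 1)) := ⟨hm, (hk.id_le (m + 1)).trans_lt' m.lt_succ_self⟩
  obtain ⟨j, -, hj⟩ := mem_iUnion₂.mp (Ico_subset_biUnion_Ico (m + 1) k hmem)
  exact ⟨j, hj⟩

theorem StrictMono.exists_segmentIndex {k : ℕ → ℕ} (hk : StrictMono k) :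
    ∃ J : ℕ → ℕ, ∀ j m, m ∈ Ico (k j) (k (j + 1)) → J m = j := by
  classical
  refine ⟨fun m => if h : ∃ j, m ∈ Ico (k j) (k (j + 1)) then h.choose else 0, ?_⟩
  intro j m hm
  have h : ∃ j, m ∈ Ico (k j) (k (j + 1)) := ⟨j, hm⟩
  simp only [dif_pos h]
  exact hk.eq_of_mem_Ico_of_mem_Ico h.choose_spec hm

namespace NFA

variable {A Q : Type} (M : NFA A Q)

def IsRunOn (w : ℕ → A) (ρ : ℕ → Q) (I : Set ℕ) : Prop :=
  ∀ i ∈ I, ρ (i + 1) ∈ M.step (ρ i) (w i)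

def buchiLanguage : Set (ℕ → A) :=
  {w | ∃ ρ : ℕ → Q, ρ 0 ∈ M.start ∧ M.IsRunOn w ρ univ ∧ ∃ᶠ i in atTop, ρ i ∈ M.accept}

variable {M}

theorem mem_evalFrom_segment_iff {S : Set Q} {q : Q} (w : ℕ → A) (a n : ℕ) :
    q ∈ M.evalFrom S ((List.range n).map fun t => w (a + t)) ↔
      ∃ ρ : ℕ → Q, ρ a ∈ S ∧ ρ (a + n) = q ∧ M.IsRunOn w ρ (Ico a (a + n)) := by
  induction n generalizing q with
  | zero =>
    refine ⟨fun hq => ⟨fun _ => q, hq, rfl, fun i hi => ?_⟩, ?_⟩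
    · simp at hi
    · rintro ⟨ρ, hρa, rfl, -⟩
      simpa using hρa
  | succ n ih =>
    simp only [List.range_succ, List.map_append, List.map_singleton, evalFrom_append,
      evalFrom_singleton, mem_stepSet, ih]
    constructor
    · rintro ⟨_, ⟨ρ, hρa, rfl, hρ⟩, hq⟩
      refine ⟨Function.update ρ (a + n + 1) q, ?_, by simp [← add_assoc], fun i hi => ?_⟩
      · rwa [Function.update_of_ne (by omega)]
      · obtain hi' | rfl : i < a + n ∨ i = a + n := by have := hi.2; omega
        · rw [Function.update_of_ne (by omega), Function.update_of_ne (by omega)]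
          exact hρ i ⟨hi.1, hi'⟩
        · rwa [Function.update_self, Function.update_of_ne (by omega)]
    · rintro ⟨ρ, hρa, rfl, hρ⟩
      exact ⟨ρ (a + n), ⟨ρ, hρa, rfl, fun i hi => hρ i (Ico_subset_Ico_right (by omega) hi)⟩,
        hρ (a + n) (by simp)⟩

theorem exists_isRunOn_univ_of_segments {w : ℕ → A} {k : ℕ → ℕ} (hk : StrictMono k)
    {τ : ℕ → Q} {σ : ℕ → ℕ → Q} (hτ : M.IsRunOn w τ (Ico 0 (k 0)))
    (hσ : ∀ j, M.IsRunOn w (σ j) (Ico (k j) (k (j + 1))))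
    (hτσ : τ (k 0) = σ 0 (k 0)) (hσσ : ∀ j, σ j (k (j + 1)) = σ (j + 1) (k (j + 1))) :
    ∃ ρ : ℕ → Q, M.IsRunOn w ρ univ ∧ ρ 0 = τ 0 ∧ ∀ j, ρ (k j) = σ j (k j) := by
  classical
  obtain ⟨J, hJ⟩ := hk.exists_segmentIndex
  set ρ : ℕ → Q := fun m => if m < k 0 then τ m else σ (J m) m with hρ_def
  have hρσ : ∀ j m, m ∈ Ico (k j) (k (j + 1)) → ρ m = σ j m := fun j m hm => by
    simp only [hρ_def, if_neg (not_lt.2 ((hk.monotone j.zero_le).trans hm.1)), hJ j m hm]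
  have hρk : ∀ j, ρ (k j) = σ j (k j) := fun j => hρσ j _ ⟨le_rfl, hk j.lt_succ_self⟩
  have hρτ : ∀ m ≤ k 0, ρ m = τ m := fun m hm => by
    rcases hm.lt_or_eq with hm | rfl
    · simp only [hρ_def, if_pos hm]
    · rw [hρk, hτσ]
  refine ⟨ρ, fun m _ => ?_, hρτ 0 (k 0).zero_le, hρk⟩
  rcases lt_or_ge m (k 0) with hm | hm
  · rw [hρτ m hm.le, hρτ (m + 1) hm]
    exact hτ m ⟨m.zero_le, hm⟩
  · obtain ⟨j, hj⟩ := hk.exists_mem_Ico hm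
    have hnext : ρ (m + 1) = σ j (m + 1) := by
      obtain h | h : m + 1 < k (j + 1) ∨ m + 1 = k (j + 1) :=
        (Nat.succ_le_of_lt hj.2).lt_or_eq
      · exact hρσ j _ ⟨hj.1.trans m.le_succ, h⟩
      · rw [h, hρk, hσσ]
    rw [hρσ j m hj, hnext]
    exact hσ j m hj

theorem mem_omegaCat_of_isRunOn {w : ℕ → A} {ρ : ℕ → Q} {k : ℕ → ℕ} {f : Q}
    (hρ : M.IsRunOn w ρ univ) (hρ0 : ρ 0 ∈ M.start) (hk : StrictMono k)
    (hρk : ∀ j, ρ (k j) = f) :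
    w ∈ OmegaCat {x | f ∈ M.evalFrom M.start x} {x | f ∈ M.evalFrom {f} x} := by
  refine ⟨k, fun j => hk j.lt_succ_self, ?_, fun j => ?_⟩
  · have hpre := (mem_evalFrom_segment_iff w 0 (k 0)).2
      ⟨ρ, hρ0, by simpa using hρk 0, fun i _ => hρ i trivial⟩
    simpa using hpre
  · have hkj : k j + (k (j + 1) - k j) = k (j + 1) := Nat.add_sub_cancel' (hk j.lt_succ_self).le
    refine (mem_evalFrom_segment_iff w _ _).2 ⟨ρ, hρk j, ?_, fun i _ => hρ i trivial⟩
    rw [hkj, hρk]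

theorem mem_buchiLanguage_of_mem_omegaCat {w : ℕ → A} {f : Q} (hf : f ∈ M.accept)
    (hw : w ∈ OmegaCat {x | f ∈ M.evalFrom M.start x} {x | f ∈ M.evalFrom {f} x}) :
    w ∈ M.buchiLanguage := by
  obtain ⟨k, hk, hpre, hseg⟩ := hw
  obtain ⟨τ, hτ0, hτk, hτ⟩ := (mem_evalFrom_segment_iff w 0 (k 0)).1 (by simpa using hpre)
  choose σ hσ0 hσk hσ using fun j => (mem_evalFrom_segment_iff w (k j) _).1 (hseg j)
  have hk' : StrictMono k := strictMono_nat_of_lt_succ hk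
  have hkj : ∀ j, k j + (k (j + 1) - k j) = k (j + 1) := fun j => Nat.add_sub_cancel' (hk j).le
  simp only [hkj, zero_add] at hσk hσ hτk hτ
  obtain ⟨ρ, hρ, hρ0, hρk⟩ := exists_isRunOn_univ_of_segments hk' hτ hσ
    (hτk.trans (hσ0 0).symm) fun j => (hσk j).trans (hσ0 (j + 1)).symm
  refine ⟨ρ, hρ0 ▸ hτ0, hρ, frequently_atTop.2 fun n => ⟨k n, hk'.id_le n, ?_⟩⟩
  rw [hρk, hσ0 n]
  exact hf

theorem isRegularLang_setOf_mem_evalFrom [Fintype Q] (S : Set Q) (q : Q) :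
    IsRegularLang {x | q ∈ M.evalFrom S x} := by
  classical
  refine ⟨Set Q, inferInstance, NFA.toDFA {M with start := S, accept := {q}}, ?_⟩
  rw [toDFA_correct]
  ext x
  simp only [mem_accepts, mem_singleton_iff, exists_eq_left]
  rfl

theorem buchiLanguage_eq_iUnion_omegaCat [Finite Q] :
    M.buchiLanguage = ⋃ f : M.accept,
      OmegaCat {x | ↑f ∈ M.evalFrom M.start x} {x | ↑f ∈ M.evalFrom {↑f} x} := by
  ext w
  simp only [mem_iUnion]
  constructor
  · rintro ⟨ρ, hρ0, hρ, hacc⟩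
    obtain ⟨f, hf⟩ : ∃ f : M.accept, ∃ᶠ i in atTop, ρ i = f :=
      frequently_exists.1 (hacc.mono fun i hi => ⟨⟨ρ i, hi⟩, rfl⟩)
    have hinf := Nat.frequently_atTop_iff_infinite.1 hf
    exact ⟨f, mem_omegaCat_of_isRunOn hρ hρ0 (Nat.nth_strictMono hinf)
      (Nat.nth_mem_of_infinite hinf)⟩
  · rintro ⟨f, hw⟩
    exact mem_buchiLanguage_of_mem_omegaCat f.2 hw

end NFA

theorem stmt18_general {A : Type} (L : Set (ℕ → A))
    (hL : ∃ (Q : Type) (_ : Fintype Q) (δ : Q → A → Q → Prop) (q0 : Q) (F : Set Q),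
      L = {w | ∃ ρ : ℕ → Q, ρ 0 = q0 ∧ (∀ i, δ (ρ i) (w i) (ρ (i + 1))) ∧
            ∀ n, ∃ m ≥ n, ρ m ∈ F}) :
    ∃ (n : ℕ) (U V : Fin n → Set (List A)),
      (∀ i, IsRegularLang (U i)) ∧ (∀ i, IsRegularLang (V i)) ∧
      L = ⋃ i, OmegaCat (U i) (V i) := by
  obtain ⟨Q, _, δ, q0, F, rfl⟩ := hL
  let M : NFA A Q := ⟨fun p a => {r | δ p a r}, {q0}, F⟩
  have hM : {w | ∃ ρ : ℕ → Q, ρ 0 = q0 ∧ (∀ i, δ (ρ i) (w i) (ρ (i + 1))) ∧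
      ∀ n, ∃ m ≥ n, ρ m ∈ F} = M.buchiLanguage := by
    simp [M, NFA.buchiLanguage, NFA.IsRunOn, frequently_atTop]
  let e := Finite.equivFin M.accept
  refine ⟨Nat.card M.accept, fun i => {x | ↑(e.symm i) ∈ M.evalFrom M.start x},
    fun i => {x | ↑(e.symm i) ∈ M.evalFrom {↑(e.symm i)} x},
    fun _ => M.isRegularLang_setOf_mem_evalFrom _ _,
    fun _ => M.isRegularLang_setOf_mem_evalFrom _ _, ?_⟩
  rw [hM, M.buchiLanguage_eq_iUnion_omegaCat]
  exact (e.symm.surjective.iUnion_comp _).symm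

/-- Büchi decomposition: every ω-regular language `L` (one recognized by a
Büchi automaton) can be written as a finite union `L = ⋃ i, U_i · V_i^ω`
with all `U_i`, `V_i` regular languages of finite words. -/
theorem stmt18 {A : Type} [Fintype A] (L : Set (ℕ → A))
    (hL : ∃ (Q : Type) (_ : Fintype Q) (δ : Q → A → Q → Prop) (q0 : Q) (F : Set Q),
      L = {w | ∃ ρ : ℕ → Q, ρ 0 = q0 ∧ (∀ i, δ (ρ i) (w i) (ρ (i + 1))) ∧
            ∀ n, ∃ m ≥ n, ρ m ∈ F}) :
    ∃ (n : ℕ) (U V : Fin n → Set (List A)),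
      (∀ i, IsRegularLang (U i)) ∧ (∀ i, IsRegularLang (V i)) ∧
      L = ⋃ i, OmegaCat (U i) (V i) :=
  stmt18_general L hL
end

section
/- Transition-invariant/Ramsey principle: if a binary relation R on a set S can be covered by finitely many relations T_1, ..., T_n such that the transitive closure of R is contained in T_1 ∪ ... ∪ T_n and each T_i is well-founded, then R admits no infinite chain s_0 R s_1 R s_2 .... -/
/-!
Along an infinite `R`-chain `s`, every pair of positions `k < l` is joined by `R⁺` and hence
coloured by some `i` with `T i (s k) (s l)`. Infinite Ramsey for finitely many colours yields
an infinite monochromatic set of positions, i.e. an infinite `T i`-chain for a single `i`.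
-/

open Filter

theorem Nat.exists_strictMono_monochromatic {C : Type*} [Finite C] (P : C → ℕ → ℕ → Prop)
    (hP : ∀ k l, k < l → ∃ c, P c k l) :
    ∃ c, ∃ g : ℕ → ℕ, StrictMono g ∧ ∀ m n, m < n → P c (g m) (g n) := by
  -- Along a nonprincipal ultrafilter `U`, each `k` has a colour shared by `U`-almost all `l`,
  -- and `U`-almost all `k` have the same such colour `c`.
  let U := Ultrafilter.of (atTop : Filter ℕ)
  have hU : ∀ k, ∀ᶠ l in (U : Filter ℕ), k < l := fun k =>
    Ultrafilter.of_le atTop (eventually_gt_atTop k)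
  choose colour hcolour using fun k =>
    U.eventually_exists_iff.1 ((hU k).mono fun l hl => hP k l hl)
  obtain ⟨c, hc⟩ := U.eventually_exists_iff (P := fun c k => colour k = c) |>.1
    (Eventually.of_forall fun k => ⟨colour k, rfl⟩)
  obtain ⟨g, -, hg⟩ := exists_seq_of_forall_finset_exists (fun k => colour k = c)
    (fun k l => k < l ∧ P c k l) fun F hF =>
      (hc.and ((eventually_all_finset F).2 fun k hk => (hU k).and (hF k hk ▸ hcolour k))).exists
  exact ⟨c, g, fun m n h => (hg m n h).1, fun m n h => (hg m n h).2⟩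

/-- Transition-invariant / Ramsey principle: if the transitive closure of a
relation `R` is covered by finitely many relations `T_1, ..., T_n`, each of
which is well-founded as a transition relation (admits no infinite
`T_i`-chain), then `R` admits no infinite chain `s_0 R s_1 R s_2 ...`. -/
theorem stmt19 {S : Type} (R : S → S → Prop) (n : ℕ)
    (T : Fin n → S → S → Prop)
    (hcover : ∀ x y, Relation.TransGen R x y → ∃ i, T i x y)
    (hwf : ∀ i, ¬ ∃ x : ℕ → S, ∀ j, T i (x j) (x (j + 1))) :
    ¬ ∃ s : ℕ → S, ∀ k, R (s k) (s (k + 1)) := by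
  rintro ⟨s, hs⟩
  have hchain : ∀ k l, k < l → Relation.TransGen R (s k) (s l) :=
    Nat.rel_of_forall_rel_succ_of_lt _ fun k => Relation.TransGen.single (hs k)
  obtain ⟨i, g, -, hT⟩ := Nat.exists_strictMono_monochromatic (fun i k l => T i (s k) (s l))
    fun k l hkl => hcover _ _ (hchain k l hkl)
  exact hwf i ⟨s ∘ g, fun j => hT j (j + 1) j.lt_succ_self⟩
end
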